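/- arXiv:math/0506489 — 2 statements merged into one kernel-verified Lean document; each statement's English description precedes it below -/
import Mathlib

section
/- (Monotonicity of the Gauss–Seidel operator, Lemma A.1(i) for T_GS.) For all u, v ∈ ℝ^S, if u ≥ v (componentwise) then T_GS u ≥ T_GS v (componentwise). -/
noncomputable def TGS {S : Type*} [Fintype S] [LinearOrder S] {A : S → Type*}
    [∀ i, Fintype (A i)] [∀ i, Nonempty (A i)]
    (r : ∀ i, A i → ℝ) (p : ∀ i, A i → S → ℝ) (lam : ℝ) (v : S → ℝ) (i : S) : ℝ :=
  Finset.univ.sup' Finset.univ_nonempty fun a : A i =>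
    r i a + lam * (∑ j ∈ (Finset.univ.filter fun j => j < i).attach,
        p i a j.1 * TGS r p lam v j.1)
      + lam * ∑ j ∈ Finset.univ.filter fun j => i ≤ j, p i a j * v j
termination_by (Finset.univ.filter fun j => j < i).card
decreasing_by
  have hj : j.1 < i := (Finset.mem_filter.mp j.2).2
  apply Finset.card_lt_card
  rw [Finset.ssubset_iff_of_subset]
  · exact ⟨j.1, Finset.mem_filter.mpr ⟨Finset.mem_univ _, hj⟩, by simp⟩
  · intro x hx
    exact Finset.mem_filter.mpr ⟨Finset.mem_univ _, (Finset.mem_filter.mp hx).2.trans hj⟩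

theorem TGS_monotone {S : Type*} [Fintype S] [Nonempty S] [LinearOrder S] {A : S → Type*}
    [∀ i, Fintype (A i)] [∀ i, Nonempty (A i)]
    (r : ∀ i, A i → ℝ) (p : ∀ i, A i → S → ℝ) (lam : ℝ)
    (hp : ∀ i (a : A i) (j : S), 0 ≤ p i a j)
    (hp1 : ∀ i (a : A i), ∑ j, p i a j = 1)
    (hlam0 : 0 ≤ lam) (hlam1 : lam < 1)
    (u v : S → ℝ) (huv : ∀ j, v j ≤ u j) :
    ∀ i, TGS r p lam v i ≤ TGS r p lam u i := by
  intro i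
  induction i using WellFoundedLT.induction with
  | ind i ih =>
    rw [TGS, TGS]
    apply Finset.sup'_le
    intro a _
    refine le_trans ?_ (Finset.le_sup' _ (Finset.mem_univ a))
    gcongr with j hj j hj
    · exact hp i a j.1
    · exact ih j.1 (Finset.mem_filter.mp j.2).2
    · exact hp i a j
    · exact huv j
end

section
/- (Lemma 4: invariance of V_GS and V_GSJ under their operators.) The set V_GS is invariant under T_GS and the set V_GSJ is invariant under T_GSJ; that is, for every v ∈ ℝ^S, if T_GS v ≤ v then T_GS(T_GS v) ≤ T_GS v, and if T_GSJ v ≤ v then T_GSJ(T_GSJ v) ≤ T_GSJ v. -/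
noncomputable def TGSJ {S : Type*} [Fintype S] [LinearOrder S] {A : S → Type*}
    [∀ i, Fintype (A i)] [∀ i, Nonempty (A i)]
    (r : ∀ i, A i → ℝ) (p : ∀ i, A i → S → ℝ) (lam : ℝ) (v : S → ℝ) (i : S) : ℝ :=
  Finset.univ.sup' Finset.univ_nonempty fun a : A i =>
    (r i a + lam * (∑ j ∈ (Finset.univ.filter fun j => j < i).attach,
        p i a j.1 * TGSJ r p lam v j.1)
      + lam * ∑ j ∈ Finset.univ.filter fun j => i < j, p i a j * v j) /
      (1 - lam * p i a i)
termination_by (Finset.univ.filter fun j => j < i).card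
decreasing_by
  have hj : j.1 < i := (Finset.mem_filter.mp j.2).2
  apply Finset.card_lt_card
  rw [Finset.ssubset_iff_of_subset]
  · exact ⟨j.1, Finset.mem_filter.mpr ⟨Finset.mem_univ _, hj⟩, by simp⟩
  · intro x hx
    exact Finset.mem_filter.mpr ⟨Finset.mem_univ _, (Finset.mem_filter.mp hx).2.trans hj⟩

lemma TGS_mono {S : Type*} [Fintype S] [LinearOrder S] {A : S → Type*}
    [∀ i, Fintype (A i)] [∀ i, Nonempty (A i)]
    (r : ∀ i, A i → ℝ) (p : ∀ i, A i → S → ℝ) (lam : ℝ)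
    (hp : ∀ i (a : A i) (j : S), 0 ≤ p i a j) (hlam0 : 0 ≤ lam)
    (u v : S → ℝ) (huv : ∀ j, u j ≤ v j) (i : S) :
    TGS r p lam u i ≤ TGS r p lam v i := by
  rw [TGS, TGS]
  apply Finset.sup'_le
  intro a _
  refine le_trans ?_ (Finset.le_sup' _ (Finset.mem_univ a))
  have h1 : ∑ j ∈ (Finset.univ.filter fun j => j < i).attach,
      p i a j.1 * TGS r p lam u j.1 ≤
      ∑ j ∈ (Finset.univ.filter fun j => j < i).attach,
      p i a j.1 * TGS r p lam v j.1 := by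
    apply Finset.sum_le_sum
    intro j _
    exact mul_le_mul_of_nonneg_left (TGS_mono r p lam hp hlam0 u v huv j.1) (hp i a j.1)
  have h2 : ∑ j ∈ Finset.univ.filter fun j => i ≤ j, p i a j * u j ≤
      ∑ j ∈ Finset.univ.filter fun j => i ≤ j, p i a j * v j := by
    apply Finset.sum_le_sum
    intro j _
    exact mul_le_mul_of_nonneg_left (huv j) (hp i a j)
  exact add_le_add (add_le_add le_rfl (mul_le_mul_of_nonneg_left h1 hlam0))
    (mul_le_mul_of_nonneg_left h2 hlam0)
termination_by (Finset.univ.filter fun j => j < i).card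
decreasing_by
  have hj : j.1 < i := (Finset.mem_filter.mp j.2).2
  apply Finset.card_lt_card
  rw [Finset.ssubset_iff_of_subset]
  · exact ⟨j.1, Finset.mem_filter.mpr ⟨Finset.mem_univ _, hj⟩, by simp⟩
  · intro x hx
    exact Finset.mem_filter.mpr ⟨Finset.mem_univ _, (Finset.mem_filter.mp hx).2.trans hj⟩

lemma TGSJ_mono {S : Type*} [Fintype S] [LinearOrder S] {A : S → Type*}
    [∀ i, Fintype (A i)] [∀ i, Nonempty (A i)]
    (r : ∀ i, A i → ℝ) (p : ∀ i, A i → S → ℝ) (lam : ℝ)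
    (hp : ∀ i (a : A i) (j : S), 0 ≤ p i a j)
    (hp1 : ∀ i (a : A i), ∑ j, p i a j = 1)
    (hlam0 : 0 ≤ lam) (hlam1 : lam < 1)
    (u v : S → ℝ) (huv : ∀ j, u j ≤ v j) (i : S) :
    TGSJ r p lam u i ≤ TGSJ r p lam v i := by
  rw [TGSJ, TGSJ]
  apply Finset.sup'_le
  intro a _
  refine le_trans ?_ (Finset.le_sup' _ (Finset.mem_univ a))
  have hpii : p i a i ≤ 1 := by
    rw [← hp1 i a]
    exact Finset.single_le_sum (fun j _ => hp i a j) (Finset.mem_univ i)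
  have hden : 0 < 1 - lam * p i a i := by
    have : lam * p i a i ≤ lam * 1 := mul_le_mul_of_nonneg_left hpii hlam0
    nlinarith
  rw [div_le_div_iff_of_pos_right hden]
  have h1 : ∑ j ∈ (Finset.univ.filter fun j => j < i).attach,
      p i a j.1 * TGSJ r p lam u j.1 ≤
      ∑ j ∈ (Finset.univ.filter fun j => j < i).attach,
      p i a j.1 * TGSJ r p lam v j.1 := by
    apply Finset.sum_le_sum
    intro j _
    exact mul_le_mul_of_nonneg_left
      (TGSJ_mono r p lam hp hp1 hlam0 hlam1 u v huv j.1) (hp i a j.1)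
  have h2 : ∑ j ∈ Finset.univ.filter fun j => i < j, p i a j * u j ≤
      ∑ j ∈ Finset.univ.filter fun j => i < j, p i a j * v j := by
    apply Finset.sum_le_sum
    intro j _
    exact mul_le_mul_of_nonneg_left (huv j) (hp i a j)
  exact add_le_add (add_le_add le_rfl (mul_le_mul_of_nonneg_left h1 hlam0))
    (mul_le_mul_of_nonneg_left h2 hlam0)
termination_by (Finset.univ.filter fun j => j < i).card
decreasing_by
  have hj : j.1 < i := (Finset.mem_filter.mp j.2).2
  apply Finset.card_lt_card
  rw [Finset.ssubset_iff_of_subset]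
  · exact ⟨j.1, Finset.mem_filter.mpr ⟨Finset.mem_univ _, hj⟩, by simp⟩
  · intro x hx
    exact Finset.mem_filter.mpr ⟨Finset.mem_univ _, (Finset.mem_filter.mp hx).2.trans hj⟩

theorem VGS_VGSJ_invariant {S : Type*} [Fintype S] [Nonempty S] [LinearOrder S] {A : S → Type*}
    [∀ i, Fintype (A i)] [∀ i, Nonempty (A i)]
    (r : ∀ i, A i → ℝ) (p : ∀ i, A i → S → ℝ) (lam : ℝ)
    (hp : ∀ i (a : A i) (j : S), 0 ≤ p i a j)
    (hp1 : ∀ i (a : A i), ∑ j, p i a j = 1)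
    (hlam0 : 0 ≤ lam) (hlam1 : lam < 1) :
    (∀ v : S → ℝ, (∀ i, TGS r p lam v i ≤ v i) →
      ∀ i, TGS r p lam (TGS r p lam v) i ≤ TGS r p lam v i) ∧
    (∀ v : S → ℝ, (∀ i, TGSJ r p lam v i ≤ v i) →
      ∀ i, TGSJ r p lam (TGSJ r p lam v) i ≤ TGSJ r p lam v i) := by
  constructor
  · intro v hv i
    exact TGS_mono r p lam hp hlam0 _ v hv i
  · intro v hv i
    exact TGSJ_mono r p lam hp hp1 hlam0 hlam1 _ v hv i
end
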